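/- arXiv:2201.05859 — 3 statements merged into one kernel-verified Lean document; each statement's English description precedes it below -/
import Mathlib

section
/- Let λ : ℕ → ℝ be nonnegative with Σᵢ λᵢ < ∞, and for each i let λᵢⱼ ≥ 0 (j ≠ i) with Σ_{j≠i} λᵢⱼ = λᵢ and λᵢ > 0 for all i. Then inf over pairs i ≠ j of (λᵢⱼ + λⱼᵢ)/(λᵢ + λⱼ) equals 0. -/
/-- Lemma 4.2: if the state space is (countably) infinite and the total rate
sequence is summable, the infimum over pairs `i ≠ j` of
`(λᵢⱼ + λⱼᵢ)/(λᵢ + λⱼ)` is zero. -/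
theorem stmt_0 (l : ℕ → ℝ) (lam : ℕ → ℕ → ℝ)
    (hpos : ∀ i, 0 < l i)
    (hnn : ∀ i j, i ≠ j → 0 ≤ lam i j)
    (hsum : Summable l)
    (hrow : ∀ i, ∑' j : {j : ℕ // j ≠ i}, lam i (j : ℕ) = l i) :
    sInf {x : ℝ | ∃ i j : ℕ, i ≠ j ∧ x = (lam i j + lam j i) / (l i + l j)} = 0 := by
  set S := {x : ℝ | ∃ i j : ℕ, i ≠ j ∧ x = (lam i j + lam j i) / (l i + l j)} with hSdef
  have hsrow : ∀ i, Summable (fun j : {j : ℕ // j ≠ i} => lam i (j : ℕ)) := by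
    intro i
    by_contra h
    have h0 := tsum_eq_zero_of_not_summable h
    rw [hrow i] at h0
    exact absurd h0 (ne_of_gt (hpos i))
  have hle : ∀ i j, j ≠ i → lam i j ≤ l i := by
    intro i j hj
    rw [← hrow i]
    exact Summable.le_tsum (hsrow i) ⟨j, hj⟩ (fun b _ => hnn i b (Ne.symm b.2))
  have hmem_nonneg : ∀ x ∈ S, (0 : ℝ) ≤ x := by
    rintro x ⟨i, j, hij, rfl⟩
    exact div_nonneg (add_nonneg (hnn i j hij) (hnn j i hij.symm))
      (le_of_lt (add_pos (hpos i) (hpos j)))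
  have hne : S.Nonempty := ⟨(lam 0 1 + lam 1 0) / (l 0 + l 1), 0, 1, by norm_num, rfl⟩
  have hbdd : BddBelow S := ⟨0, fun x hx => hmem_nonneg x hx⟩
  -- the function f j = lam 0 j for j ≠ 0, 0 at 0, is summable
  set f : ℕ → ℝ := fun j => if j = 0 then 0 else lam 0 j with hfdef
  have hf : Summable f := by
    have h1 : Summable (({j : ℕ | j ≠ 0}).indicator (lam 0)) := by
      rw [← summable_subtype_iff_indicator]
      exact hsrow 0
    have h2 : ({j : ℕ | j ≠ 0}).indicator (lam 0) = f := by
      funext j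
      by_cases hj : j = 0 <;> simp [hfdef, Set.indicator, hj]
    rwa [h2] at h1
  have htend : Filter.Tendsto (fun j => (f j + l j) / l 0) Filter.atTop (nhds 0) := by
    have := (hf.tendsto_atTop_zero.add hsum.tendsto_atTop_zero).div_const (l 0)
    simpa using this
  refine le_antisymm ?_ (le_csInf hne (fun b hb => hmem_nonneg b hb))
  have key : ∀ ε : ℝ, 0 < ε → sInf S ≤ 0 + ε := by
    intro ε hε
    obtain ⟨N, hN⟩ := Filter.eventually_atTop.mp (htend.eventually (gt_mem_nhds hε))
    set j := max N 1 with hj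
    have hjN : N ≤ j := le_max_left _ _
    have hj0 : j ≠ 0 := by positivity
    have hmem : (lam 0 j + lam j 0) / (l 0 + l j) ∈ S :=
      ⟨0, j, fun h => hj0 h.symm, rfl⟩
    have hb1 : (lam 0 j + lam j 0) / (l 0 + l j) ≤ (f j + l j) / l 0 := by
      apply div_le_div₀
      · have : 0 ≤ f j := by
          simp only [hfdef, if_neg hj0]
          exact hnn 0 j (fun h => hj0 h.symm)
        linarith [(hpos j).le]
      · have h1 : lam 0 j = f j := by simp [hfdef, hj0]
        have h2 : lam j 0 ≤ l j := hle j 0 (fun h => hj0 h.symm)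
        linarith
      · exact hpos 0
      · linarith [(hpos j).le]
    have hb2 : (f j + l j) / l 0 < ε := hN j hjN
    calc sInf S ≤ (lam 0 j + lam j 0) / (l 0 + l j) := csInf_le hbdd hmem
      _ ≤ (f j + l j) / l 0 := hb1
      _ ≤ 0 + ε := by linarith
  exact le_of_forall_pos_le_add (by simpa using key)
end

section
/- Suppose for each k ∈ {1,...,m} and each k' ≠ k, λ_{kk'} : [0,∞) → (0,∞) is measurable, bounded, continuous at 0, with λ_k(y) := Σ_{k'≠k} λ_{kk'}(y) and ∫₀^∞ λ_k = ∞. Define P(k,y) := ∫₀^∞ exp(-∫₀^{y'} Σ_{k'≠k} max(λ_{kk'}(t), λ_{kk'}(y+t)) dt) · (Σ_{k'≠k} min(λ_{kk'}(y'), λ_{kk'}(y+y'))) dy'. Then P(k,y) → 1 as y → 0⁺. -/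
/-!
Write `a_y(t) = ∑ max (λ(t), λ(y + t))`, `b_y(t) = ∑ min (λ(t), λ(y + t))` and
`A_y(t) = ∫₀ᵗ a_y`. The primitive `A_y` is absolutely continuous, so `e^{-A_y} a_y` is a.e. the
derivative of `-e^{-A_y}` and integrates to `1 - e^{-A_y(T)}` over `[0, T]`. Since
`0 ≤ b_y ≤ a_y`, this gives `P(y) ≤ 1` and `P(y) ≥ 1 - e^{-A_y(T)} - ∫₀ᵀ (a_y - b_y)`.
Now `A_y(T) ≥ ∫₀ᵀ λ_k` is large for large `T`, while `a_y - b_y = ∑ |λ(y + t) - λ(t)|`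
has small integral over `[0, T]` for small `y`, by continuity of translation in `L¹`.
-/

open MeasureTheory Set Filter Topology

theorem LipschitzOnWith.comp_absolutelyContinuousOnInterval {X Y : Type*} [PseudoMetricSpace X]
    [PseudoMetricSpace Y] {φ : X → Y} {K : NNReal} {s : Set X} (hφ : LipschitzOnWith K φ s)
    {f : ℝ → X} {a b : ℝ} (hf : AbsolutelyContinuousOnInterval f a b)
    (hfs : MapsTo f (uIcc a b) s) : AbsolutelyContinuousOnInterval (φ ∘ f) a b := by
  unfold AbsolutelyContinuousOnInterval at hf ⊢
  refine squeeze_zero' (Eventually.of_forall fun _ => Finset.sum_nonneg fun _ _ => dist_nonneg)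
    ?_ (mul_zero (K : ℝ) ▸ hf.const_mul (K : ℝ))
  filter_upwards [mem_inf_of_right (mem_principal_self _)] with E hE
  rw [Finset.mul_sum]
  exact Finset.sum_le_sum fun i hi =>
    hφ.dist_le_mul _ (hfs (hE.1 i hi).1) _ (hfs (hE.1 i hi).2)

theorem LocallyLipschitz.comp_absolutelyContinuousOnInterval {E Y : Type*}
    [SeminormedAddCommGroup E] [PseudoMetricSpace Y] {φ : E → Y} (hφ : LocallyLipschitz φ)
    {f : ℝ → E} {a b : ℝ} (hf : AbsolutelyContinuousOnInterval f a b) :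
    AbsolutelyContinuousOnInterval (φ ∘ f) a b := by
  have hcpt : IsCompact (f '' uIcc a b) := isCompact_uIcc.image_of_continuousOn hf.continuousOn
  obtain ⟨K, hK⟩ := hφ.locallyLipschitzOn.exists_lipschitzOnWith_of_compact hcpt
  exact hK.comp_absolutelyContinuousOnInterval hf (mapsTo_image _ _)

theorem integral_exp_neg_primitive_mul {g : ℝ → ℝ} {a b : ℝ}
    (hg : IntervalIntegrable g volume a b) :
    ∫ t in a..b, Real.exp (-∫ s in a..t, g s) * g t = 1 - Real.exp (-∫ s in a..b, g s) := by
  set F : ℝ → ℝ := fun x => ∫ s in a..x, g s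
  have hG : AbsolutelyContinuousOnInterval (Real.exp ∘ fun x => -F x) a b :=
    Real.contDiff_exp.locallyLipschitz.comp_absolutelyContinuousOnInterval
      (hg.absolutelyContinuousOnInterval_intervalIntegral left_mem_uIcc).neg
  have hderiv : ∀ᵐ t, t ∈ uIoc a b →
      Real.exp (-F t) * g t = -deriv (Real.exp ∘ fun x => -F x) t := by
    filter_upwards [hg.ae_hasDerivAt_integral] with t ht htab
    have hFt : HasDerivAt F (g t) t := ht (uIoc_subset_uIcc htab) a left_mem_uIcc
    have hGt : HasDerivAt (Real.exp ∘ fun x => -F x) (Real.exp (-F t) * -g t) t := hFt.neg.exp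
    rw [hGt.deriv]
    ring
  rw [intervalIntegral.integral_congr_ae hderiv, intervalIntegral.integral_neg,
    hG.integral_deriv_eq_sub]
  simp [F]

theorem tendsto_integral_norm_comp_add_sub {E : Type*} [NormedAddCommGroup E] [NormedSpace ℝ E]
    {g : ℝ → E} (hg : Integrable g) :
    Tendsto (fun y => ∫ t, ‖g (y + t) - g t‖) (𝓝 0) (𝓝 0) := by
  have : Fact ((1 : ENNReal) ≠ ⊤) := ⟨ENNReal.one_ne_top⟩
  set f : ℝ →₁[volume] E := hg.toL1 g
  -- `DomAddAct.mk y +ᵥ f` is the translate `t ↦ f (y + t)`, and this action on `L¹` is continuous.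
  have hcont : Continuous fun y : ℝ => DomAddAct.mk y +ᵥ f :=
    continuous_vadd.comp (DomAddAct.continuous_mk.prodMk continuous_const)
  have hlim := (hcont.tendsto 0).sub_const f
  rw [DomAddAct.mk_zero, zero_vadd, sub_self] at hlim
  refine (tendsto_norm_zero.comp hlim).congr fun y => ?_
  simp only [Function.comp_apply, L1.norm_eq_integral_norm]
  have hfg : f =ᵐ[volume] g := hg.coeFn_toL1
  refine integral_congr_ae ?_
  filter_upwards [Lp.coeFn_sub (DomAddAct.mk y +ᵥ f) f,
    DomAddAct.vadd_Lp_ae_eq (DomAddAct.mk y) f,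
    (measurePreserving_add_left volume y).quasiMeasurePreserving.ae_eq_comp hfg, hfg]
    with t h1 h2 h3 h4
  simp only [h1, Pi.sub_apply, h2, vadd_eq_add, h4]
  exact congrArg (‖· - g t‖) h3

theorem tendsto_intervalIntegral_abs_comp_add_sub {g : ℝ → ℝ}
    (hg : ∀ T ≥ 0, IntervalIntegrable g volume 0 T) {T : ℝ} (hT : 0 ≤ T) :
    Tendsto (fun y => ∫ t in 0..T, |g (y + t) - g t|) (𝓝[>] 0) (𝓝 0) := by
  set h := (Ioc 0 (T + 1)).indicator g
  have hh : Integrable h := (integrable_indicator_iff measurableSet_Ioc).2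
    ((intervalIntegrable_iff_integrableOn_Ioc_of_le (by linarith)).1 (hg (T + 1) (by linarith)))
  refine squeeze_zero' ?_ ?_ ((tendsto_integral_norm_comp_add_sub hh).mono_left nhdsWithin_le_nhds)
  · exact Eventually.of_forall fun y => intervalIntegral.integral_nonneg hT fun _ _ => abs_nonneg _
  filter_upwards [Ioo_mem_nhdsGT one_pos] with y hy
  have hgh : ∀ s ∈ Ioc 0 (T + 1), g s = h s := fun s hs => (indicator_of_mem hs g).symm
  calc ∫ t in 0..T, |g (y + t) - g t| = ∫ t in Ioc 0 T, ‖h (y + t) - h t‖ := by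
        rw [intervalIntegral.integral_of_le hT]
        refine setIntegral_congr_fun measurableSet_Ioc fun t ht => ?_
        rw [Real.norm_eq_abs, hgh t ⟨ht.1, by linarith [ht.2]⟩,
          hgh (y + t) ⟨by linarith [hy.1, ht.1], by linarith [hy.2, ht.2]⟩]
    _ ≤ ∫ t, ‖h (y + t) - h t‖ :=
        setIntegral_le_integral ((hh.comp_add_left y).sub hh).norm
          (Eventually.of_forall fun _ => norm_nonneg _)

theorem IntervalIntegrable.sup {f g : ℝ → ℝ} {μ : Measure ℝ} {a b : ℝ}
    (hf : IntervalIntegrable f μ a b) (hg : IntervalIntegrable g μ a b) :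
    IntervalIntegrable (f ⊔ g) μ a b :=
  ⟨hf.1.sup hg.1, hf.2.sup hg.2⟩

theorem IntervalIntegrable.inf {f g : ℝ → ℝ} {μ : Measure ℝ} {a b : ℝ}
    (hf : IntervalIntegrable f μ a b) (hg : IntervalIntegrable g μ a b) :
    IntervalIntegrable (f ⊓ g) μ a b :=
  ⟨hf.1.inf hg.1, hf.2.inf hg.2⟩

theorem intervalIntegrable_of_nonneg_of_le {g : ℝ → ℝ} (hg : Measurable g)
    (hg0 : ∀ t ≥ 0, 0 ≤ g t) {M : ℝ} (hM : ∀ t ≥ 0, g t ≤ M) {T : ℝ} (hT : 0 ≤ T) :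
    IntervalIntegrable g volume 0 T := by
  refine intervalIntegrable_const (c := M) |>.mono_fun' hg.aestronglyMeasurable ?_
  rw [uIoc_of_le hT]
  filter_upwards [ae_restrict_mem measurableSet_Ioc] with t ht
  rw [Real.norm_of_nonneg (hg0 t ht.1.le)]
  exact hM t ht.1.le

theorem intervalIntegrable_comp_const_add {g : ℝ → ℝ}
    (hg : ∀ T ≥ 0, IntervalIntegrable g volume 0 T) {y T : ℝ} (hy : 0 ≤ y) (hT : 0 ≤ T) :
    IntervalIntegrable (fun t => g (y + t)) volume 0 T := by
  have hsub : uIcc y (y + T) ⊆ uIcc 0 (y + T) :=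
    uIcc_subset_uIcc (by rw [uIcc_of_le (by linarith)]; exact ⟨hy, by linarith⟩) right_mem_uIcc
  simpa using ((hg (y + T) (by linarith)).mono_set hsub).comp_add_left y

section MergedRates

variable {ι : Type*} {s : Finset ι} {g : ι → ℝ → ℝ} {y T : ℝ}

theorem intervalIntegrable_sum_max_comp_add
    (hg : ∀ i ∈ s, ∀ T ≥ 0, IntervalIntegrable (g i) volume 0 T) (hy : 0 ≤ y) (hT : 0 ≤ T) :
    IntervalIntegrable (fun t => ∑ i ∈ s, max (g i t) (g i (y + t))) volume 0 T := by
  simpa [Finset.sum_fn] using IntervalIntegrable.sum s fun i hi =>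
    (hg i hi T hT).sup (intervalIntegrable_comp_const_add (hg i hi) hy hT)

theorem intervalIntegrable_sum_min_comp_add
    (hg : ∀ i ∈ s, ∀ T ≥ 0, IntervalIntegrable (g i) volume 0 T) (hy : 0 ≤ y) (hT : 0 ≤ T) :
    IntervalIntegrable (fun t => ∑ i ∈ s, min (g i t) (g i (y + t))) volume 0 T := by
  simpa [Finset.sum_fn] using IntervalIntegrable.sum s fun i hi =>
    (hg i hi T hT).inf (intervalIntegrable_comp_const_add (hg i hi) hy hT)

theorem sum_min_comp_add_nonneg (hg0 : ∀ i ∈ s, ∀ t ≥ 0, 0 ≤ g i t) (hy : 0 ≤ y) {t : ℝ}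
    (ht : 0 ≤ t) : 0 ≤ ∑ i ∈ s, min (g i t) (g i (y + t)) :=
  Finset.sum_nonneg fun i hi => le_min (hg0 i hi t ht) (hg0 i hi _ (add_nonneg hy ht))

theorem intervalIntegral_sum_le_intervalIntegral_sum_max_comp_add
    (hg : ∀ i ∈ s, ∀ T ≥ 0, IntervalIntegrable (g i) volume 0 T) (hy : 0 ≤ y) (hT : 0 ≤ T) :
    ∫ t in 0..T, ∑ i ∈ s, g i t ≤ ∫ t in 0..T, ∑ i ∈ s, max (g i t) (g i (y + t)) := by
  have hsum : IntervalIntegrable (fun t => ∑ i ∈ s, g i t) volume 0 T := by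
    simpa [Finset.sum_fn] using IntervalIntegrable.sum s fun i hi => hg i hi T hT
  exact intervalIntegral.integral_mono_on hT hsum (intervalIntegrable_sum_max_comp_add hg hy hT)
    fun t _ => Finset.sum_le_sum fun _ _ => le_max_left _ _

theorem tendsto_intervalIntegral_sum_max_sub_sum_min
    (hg : ∀ i ∈ s, ∀ T ≥ 0, IntervalIntegrable (g i) volume 0 T) (hT : 0 ≤ T) :
    Tendsto (fun y => ∫ t in 0..T,
      (∑ i ∈ s, max (g i t) (g i (y + t)) - ∑ i ∈ s, min (g i t) (g i (y + t))))
      (𝓝[>] 0) (𝓝 0) := by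
  simp_rw [← Finset.sum_sub_distrib, max_sub_min_eq_abs]
  have hlim := tendsto_finsetSum s fun i hi =>
    tendsto_intervalIntegral_abs_comp_add_sub (hg i hi) hT
  rw [Finset.sum_const_zero] at hlim
  refine hlim.congr' ?_
  filter_upwards [self_mem_nhdsWithin] with y (hy : 0 < y)
  exact (intervalIntegral.integral_finsetSum fun i hi =>
    ((intervalIntegrable_comp_const_add (hg i hi) hy.le hT).sub (hg i hi T hT)).abs).symm

end MergedRates

section Survival

variable {a b : ℝ → ℝ} {T : ℝ}

theorem intervalIntegrable_exp_neg_primitive_mul (ha : IntervalIntegrable a volume 0 T)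
    (hb : IntervalIntegrable b volume 0 T) :
    IntervalIntegrable (fun t => Real.exp (-∫ s in 0..t, a s) * b t) volume 0 T :=
  hb.continuousOn_mul (Real.continuous_exp.comp_continuousOn
    (intervalIntegral.continuousOn_primitive_interval' ha left_mem_uIcc).neg)

theorem intervalIntegral_exp_neg_primitive_mul_le_one (ha : IntervalIntegrable a volume 0 T)
    (hb : IntervalIntegrable b volume 0 T) (hba : ∀ t ≥ 0, b t ≤ a t) (hT : 0 ≤ T) :
    ∫ t in 0..T, Real.exp (-∫ s in 0..t, a s) * b t ≤ 1 := by
  calc ∫ t in 0..T, Real.exp (-∫ s in 0..t, a s) * b t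
      ≤ ∫ t in 0..T, Real.exp (-∫ s in 0..t, a s) * a t :=
        intervalIntegral.integral_mono_on hT (intervalIntegrable_exp_neg_primitive_mul ha hb)
          (intervalIntegrable_exp_neg_primitive_mul ha ha) fun t ht =>
          mul_le_mul_of_nonneg_left (hba t ht.1) (Real.exp_pos _).le
    _ = 1 - Real.exp (-∫ s in 0..T, a s) := integral_exp_neg_primitive_mul ha
    _ ≤ 1 := by linarith [Real.exp_pos (-∫ s in 0..T, a s)]

theorem integrableOn_Ioi_exp_neg_primitive_mul
    (ha : ∀ T ≥ 0, IntervalIntegrable a volume 0 T) (hb : ∀ T ≥ 0, IntervalIntegrable b volume 0 T)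
    (hb0 : ∀ t ≥ 0, 0 ≤ b t) (hba : ∀ t ≥ 0, b t ≤ a t) :
    IntegrableOn (fun t => Real.exp (-∫ s in 0..t, a s) * b t) (Ioi 0) := by
  have hI := fun n : ℕ => intervalIntegrable_exp_neg_primitive_mul (ha n n.cast_nonneg)
    (hb n n.cast_nonneg)
  refine integrableOn_Ioi_of_intervalIntegral_norm_bounded 1 0 (fun n => (hI n).1)
    tendsto_natCast_atTop_atTop (Eventually.of_forall fun n => ?_)
  have hnorm : ∫ t in (0 : ℝ)..n, ‖Real.exp (-∫ s in 0..t, a s) * b t‖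
      = ∫ t in (0 : ℝ)..n, Real.exp (-∫ s in 0..t, a s) * b t := by
    refine intervalIntegral.integral_congr fun t ht => ?_
    rw [uIcc_of_le n.cast_nonneg] at ht
    exact Real.norm_of_nonneg (mul_nonneg (Real.exp_pos _).le (hb0 t ht.1))
  rw [hnorm]
  exact intervalIntegral_exp_neg_primitive_mul_le_one (ha n n.cast_nonneg) (hb n n.cast_nonneg)
    hba n.cast_nonneg

theorem integral_Ioi_exp_neg_primitive_mul_le_one
    (ha : ∀ T ≥ 0, IntervalIntegrable a volume 0 T) (hb : ∀ T ≥ 0, IntervalIntegrable b volume 0 T)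
    (hb0 : ∀ t ≥ 0, 0 ≤ b t) (hba : ∀ t ≥ 0, b t ≤ a t) :
    ∫ t in Ioi 0, Real.exp (-∫ s in 0..t, a s) * b t ≤ 1 := by
  refine le_of_tendsto (intervalIntegral_tendsto_integral_Ioi 0
    (integrableOn_Ioi_exp_neg_primitive_mul ha hb hb0 hba) tendsto_id) ?_
  filter_upwards [eventually_ge_atTop 0] with T hT
  exact intervalIntegral_exp_neg_primitive_mul_le_one (ha T hT) (hb T hT) hba hT

theorem one_sub_exp_neg_primitive_sub_le_integral_Ioi
    (ha : ∀ T ≥ 0, IntervalIntegrable a volume 0 T) (hb : ∀ T ≥ 0, IntervalIntegrable b volume 0 T)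
    (hb0 : ∀ t ≥ 0, 0 ≤ b t) (hba : ∀ t ≥ 0, b t ≤ a t) (hT : 0 ≤ T) :
    1 - Real.exp (-∫ s in 0..T, a s) - ∫ t in 0..T, (a t - b t)
      ≤ ∫ t in Ioi 0, Real.exp (-∫ s in 0..t, a s) * b t := by
  have hsub : IntervalIntegrable (fun t => a t - b t) volume 0 T := (ha T hT).sub (hb T hT)
  calc 1 - Real.exp (-∫ s in 0..T, a s) - ∫ t in 0..T, (a t - b t)
      ≤ (∫ t in 0..T, Real.exp (-∫ s in 0..t, a s) * a t)
          - ∫ t in 0..T, Real.exp (-∫ s in 0..t, a s) * (a t - b t) := by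
        rw [integral_exp_neg_primitive_mul (ha T hT)]
        gcongr
        refine intervalIntegral.integral_mono_on hT
          (intervalIntegrable_exp_neg_primitive_mul (ha T hT) hsub) hsub fun t ht => ?_
        exact mul_le_of_le_one_left (sub_nonneg.2 (hba t ht.1))
          (Real.exp_le_one_iff.2 (neg_nonpos.2
            (intervalIntegral.integral_nonneg ht.1 fun s hs => (hb0 s hs.1).trans (hba s hs.1))))
    _ = ∫ t in 0..T, Real.exp (-∫ s in 0..t, a s) * b t := by
        rw [← intervalIntegral.integral_sub
          (intervalIntegrable_exp_neg_primitive_mul (ha T hT) (ha T hT))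
          (intervalIntegrable_exp_neg_primitive_mul (ha T hT) hsub)]
        congr with t
        ring
    _ ≤ ∫ t in Ioi 0, Real.exp (-∫ s in 0..t, a s) * b t := by
        rw [intervalIntegral.integral_of_le hT]
        exact setIntegral_mono_set (integrableOn_Ioi_exp_neg_primitive_mul ha hb hb0 hba)
          (ae_restrict_of_forall_mem measurableSet_Ioi fun t ht =>
            mul_nonneg (Real.exp_pos _).le (hb0 t (le_of_lt ht)))
          Ioc_subset_Ioi_self.eventuallyLE

end Survival

theorem tendsto_one_of_le_one_of_forall_le {ι : Type*} {l : Filter ι} {P : ι → ℝ}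
    {e : ℝ → ℝ} {D : ℝ → ι → ℝ} (hP : ∀ᶠ y in l, P y ≤ 1) (he : Tendsto e atTop (𝓝 0))
    (hD : ∀ T ≥ 0, Tendsto (D T) l (𝓝 0)) (hlow : ∀ T ≥ 0, ∀ᶠ y in l, 1 - e T - D T y ≤ P y) :
    Tendsto P l (𝓝 1) := by
  refine tendsto_order.2 ⟨fun c hc => ?_, fun c hc => hP.mono fun y hy => hy.trans_lt hc⟩
  obtain ⟨T, heT, hT⟩ :=
    ((he.eventually (gt_mem_nhds (half_pos (sub_pos.2 hc)))).and (eventually_ge_atTop 0)).exists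
  filter_upwards [hlow T hT, (hD T hT).eventually (gt_mem_nhds (half_pos (sub_pos.2 hc)))]
    with y hPy hDy
  linarith

theorem stmt_4_general (m : ℕ) (lam : Fin m → Fin m → ℝ → ℝ) (k : Fin m)
    (hmeas : ∀ k k' : Fin m, k' ≠ k → Measurable (lam k k'))
    (hpos : ∀ (k k' : Fin m), k' ≠ k → ∀ y : ℝ, 0 ≤ y → 0 < lam k k' y)
    (hbdd : ∀ k k' : Fin m, k' ≠ k → ∃ M : ℝ, ∀ y : ℝ, 0 ≤ y → lam k k' y ≤ M)
    (hdiv : Tendsto (fun y : ℝ =>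
        ∫ t in (0:ℝ)..y, ∑ k' ∈ Finset.univ.erase k, lam k k' t) atTop atTop)
    (P : ℝ → ℝ)
    (hP : ∀ y : ℝ, P y =
      ∫ y' in Ioi (0:ℝ),
        Real.exp (-∫ t in (0:ℝ)..y',
            ∑ k' ∈ Finset.univ.erase k, max (lam k k' t) (lam k k' (y + t)))
          * (∑ k' ∈ Finset.univ.erase k, min (lam k k' y') (lam k k' (y + y')))) :
    Tendsto P (nhdsWithin 0 (Ioi 0)) (nhds 1) := by
  set E := Finset.univ.erase k
  have hne : ∀ k' ∈ E, k' ≠ k := fun k' hk' => Finset.ne_of_mem_erase hk'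
  have hnonneg : ∀ k' ∈ E, ∀ t ≥ 0, 0 ≤ lam k k' t := fun k' hk' t ht =>
    (hpos k k' (hne k' hk') t ht).le
  have hint : ∀ k' ∈ E, ∀ T ≥ 0, IntervalIntegrable (lam k k') volume 0 T := fun k' hk' T hT =>
    have ⟨_, hM⟩ := hbdd k k' (hne k' hk')
    intervalIntegrable_of_nonneg_of_le (hmeas k k' (hne k' hk')) (hnonneg k' hk') hM hT
  have hmax := fun {y : ℝ} (hy : 0 ≤ y) T (hT : 0 ≤ T) =>
    intervalIntegrable_sum_max_comp_add hint hy hT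
  have hmin := fun {y : ℝ} (hy : 0 ≤ y) T (hT : 0 ≤ T) =>
    intervalIntegrable_sum_min_comp_add hint hy hT
  have hmin_le_max : ∀ y t, ∑ k' ∈ E, min (lam k k' t) (lam k k' (y + t))
      ≤ ∑ k' ∈ E, max (lam k k' t) (lam k k' (y + t)) := fun y t =>
    Finset.sum_le_sum fun _ _ => min_le_max
  refine tendsto_one_of_le_one_of_forall_le ?_ (Real.tendsto_exp_neg_atTop_nhds_zero.comp hdiv)
    (fun T hT => tendsto_intervalIntegral_sum_max_sub_sum_min hint hT) fun T hT => ?_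
  · filter_upwards [self_mem_nhdsWithin] with y (hy : 0 < y)
    rw [hP y]
    exact integral_Ioi_exp_neg_primitive_mul_le_one (hmax hy.le) (hmin hy.le)
      (fun t => sum_min_comp_add_nonneg hnonneg hy.le) fun t _ => hmin_le_max y t
  · filter_upwards [self_mem_nhdsWithin] with y (hy : 0 < y)
    refine le_trans ?_ ((hP y).symm ▸ one_sub_exp_neg_primitive_sub_le_integral_Ioi
      (hmax hy.le) (hmin hy.le) (fun t => sum_min_comp_add_nonneg hnonneg hy.le)
      (fun t _ => hmin_le_max y t) hT)
    dsimp only [Function.comp_apply]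
    gcongr
    exact intervalIntegral_sum_le_intervalIntegral_sum_max_comp_add hint hy.le hT

/-- Proposition 3.7: the merging probability `P(k,y)` tends to `1` as the age
discrepancy `y` tends to `0⁺`, provided the rates are continuous at `0`. -/
theorem stmt_4 (m : ℕ) (hm : 1 ≤ m) (lam : Fin m → Fin m → ℝ → ℝ) (k : Fin m)
    (hmeas : ∀ k k' : Fin m, k' ≠ k → Measurable (lam k k'))
    (hpos : ∀ (k k' : Fin m), k' ≠ k → ∀ y : ℝ, 0 ≤ y → 0 < lam k k' y)
    (hbdd : ∀ k k' : Fin m, k' ≠ k → ∃ M : ℝ, ∀ y : ℝ, 0 ≤ y → lam k k' y ≤ M)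
    (hcont : ∀ k k' : Fin m, k' ≠ k → ContinuousAt (lam k k') 0)
    (hdiv : Tendsto (fun y : ℝ =>
        ∫ t in (0:ℝ)..y, ∑ k' ∈ Finset.univ.erase k, lam k k' t) atTop atTop)
    (P : ℝ → ℝ)
    (hP : ∀ y : ℝ, P y =
      ∫ y' in Ioi (0:ℝ),
        Real.exp (-∫ t in (0:ℝ)..y',
            ∑ k' ∈ Finset.univ.erase k, max (lam k k' t) (lam k k' (y + t)))
          * (∑ k' ∈ Finset.univ.erase k, min (lam k k' y') (lam k k' (y + y')))) :
    Tendsto P (nhdsWithin 0 (Ioi 0)) (nhds 1) :=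
  stmt_4_general m lam k hmeas hpos hbdd hdiv P hP
end

section
/- Let 𝒳 be a finite set with at least 2 elements and for each ordered pair (k,k') with k ≠ k' let λ_{kk'} : [0,∞) → (0,∞) be measurable with ‖λ_{kk'}‖_∞ < ∞, C := Σ_{(k,k')} ‖λ_{kk'}‖_∞ < ∞. Suppose for each k there exists k' ≠ k with ess inf λ_{kk'} > 0. Then inf_{k ∈ 𝒳, y ≥ 0} P(k,y) > 0, where P(k,y) := ∫₀^∞ exp(-∫₀^{y'} Σ_{k'≠k} max(λ_{kk'}(t),λ_{kk'}(y+t)) dt) (Σ_{k'≠k} min(λ_{kk'}(y'),λ_{kk'}(y+y'))) dy'. -/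
open MeasureTheory Set Filter Topology

/-!
Fix a state `k` and a target `k₀` whose rate is a.e. at least `δ > 0`. On `(0, ∞)` the merging
rate `∑ min` is then at least `δ` while the total rate `∑ max` is at most `C = ∑ B k k'`, so the
survival factor is at least `exp (-C y')` and `P(k, y) ≥ δ ∫₀^∞ exp (-C y') dy' = δ / C`, a bound
independent of `y`. Finitely many states give a uniform bound.
-/

/-- The paper's `P(k, y)` with total rate `g` and merging rate `m`. -/
noncomputable def mergingIntegral (g m : ℝ → ℝ) : ℝ :=
  ∫ y' in Ioi (0:ℝ), Real.exp (-∫ t in (0:ℝ)..y', g t) * m y'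

theorem exists_pos_forall_le_of_finite {ι α : Type*} [Finite ι] {f : ι → α → ℝ} {p : α → Prop}
    (h : ∀ i, ∃ ε, 0 < ε ∧ ∀ a, p a → ε ≤ f i a) :
    ∃ ε, 0 < ε ∧ ∀ i a, p a → ε ≤ f i a := by
  -- each bound holds for every small enough `ε > 0`, and finitely many such events intersect
  have hev : ∀ i, ∀ᶠ ε in 𝓝[>] (0:ℝ), ∀ a, p a → ε ≤ f i a := fun i => by
    obtain ⟨ε, hε, hle⟩ := h i
    filter_upwards [Ioo_mem_nhdsGT hε] with η hη a ha using hη.2.le.trans (hle a ha)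
  obtain ⟨ε, hle, hε⟩ := ((eventually_all.2 hev).and self_mem_nhdsWithin).exists
  exact ⟨ε, hε, hle⟩

theorem ae_restrict_Ioi_zero_add {p : ℝ → Prop} {y : ℝ} (hy : 0 ≤ y)
    (h : ∀ᵐ t ∂volume.restrict (Ioi 0), p t) : ∀ᵐ t ∂volume.restrict (Ioi 0), p (y + t) := by
  rw [ae_restrict_iff' measurableSet_Ioi] at h ⊢
  filter_upwards [(measurePreserving_add_left volume y).quasiMeasurePreserving.ae h]
    with t ht htpos
  exact ht (add_pos_of_nonneg_of_pos hy htpos)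

theorem continuousOn_primitive_Ioi {f : ℝ → ℝ} {a : ℝ}
    (hf : ∀ b, a < b → IntervalIntegrable f volume a b) :
    ContinuousOn (fun x => ∫ t in a..x, f t) (Ioi a) := by
  intro x hx
  have hax : a < x + 1 := (mem_Ioi.1 hx).trans (lt_add_one x)
  have hnhds : uIcc a (x + 1) ∈ 𝓝 x := by
    rw [uIcc_of_le hax.le]
    exact Icc_mem_nhds hx (lt_add_one x)
  exact ((intervalIntegral.continuousOn_primitive_interval' (hf _ hax) left_mem_uIcc).continuousAt
    hnhds).continuousWithinAt

section MergingIntegral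

variable {g m : ℝ → ℝ} {C δ y : ℝ}

theorem intervalIntegral_mem_Icc_of_ae_le (hg : IntervalIntegrable g volume 0 y) (hy : 0 ≤ y)
    (hδg : ∀ᵐ t ∂volume.restrict (Ioi 0), δ ≤ g t) (hgC : ∀ t, 0 < t → g t ≤ C) :
    ∫ t in (0:ℝ)..y, g t ∈ Icc (δ * y) (C * y) := by
  have hg' := (intervalIntegrable_iff_integrableOn_Ioc_of_le hy).1 hg
  rw [intervalIntegral.integral_of_le hy]
  constructor
  · have := setIntegral_mono_ae_restrict (integrableOn_const measure_Ioc_lt_top.ne) hg'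
      (ae_restrict_of_ae_restrict_of_subset Ioc_subset_Ioi_self hδg)
    simpa [hy, mul_comm] using this
  · have := setIntegral_mono_on hg' (integrableOn_const measure_Ioc_lt_top.ne) measurableSet_Ioc
      fun t ht => hgC t ht.1
    simpa [hy, mul_comm] using this

theorem div_le_mergingIntegral (hg : Measurable g) (hm : Measurable m)
    (hgC : ∀ t, 0 < t → g t ≤ C) (hm_nonneg : ∀ t, 0 < t → 0 ≤ m t)
    (hmg : ∀ t, 0 < t → m t ≤ g t) (hδ : 0 < δ)
    (hδm : ∀ᵐ t ∂volume.restrict (Ioi 0), δ ≤ m t) :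
    δ / C ≤ mergingIntegral g m := by
  have hpos : ∀ᵐ t ∂volume.restrict (Ioi (0:ℝ)), 0 < t := ae_restrict_mem measurableSet_Ioi
  have hδg : ∀ᵐ t ∂volume.restrict (Ioi 0), δ ≤ g t := by
    filter_upwards [hδm, hpos] with t ht htpos using ht.trans (hmg t htpos)
  have hC : 0 < C := by
    have : (ae (volume.restrict (Ioi (0:ℝ)))).NeBot := ae_restrict_neBot.2 (by simp)
    obtain ⟨t, ht, htpos⟩ := (hδg.and hpos).exists
    linarith [hgC t htpos]
  have hg_int : ∀ b, 0 < b → IntervalIntegrable g volume 0 b := fun b hb =>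
    (intervalIntegrable_iff_integrableOn_Ioc_of_le hb.le).2 <|
      Measure.integrableOn_of_bounded (M := C) measure_Ioc_lt_top.ne hg.aestronglyMeasurable <| by
        filter_upwards [ae_restrict_mem measurableSet_Ioc] with t ht
        rw [Real.norm_of_nonneg ((hm_nonneg t ht.1).trans (hmg t ht.1))]
        exact hgC t ht.1
  set G := fun y' => ∫ t in (0:ℝ)..y', g t
  have hG : ∀ y', 0 < y' → G y' ∈ Icc (δ * y') (C * y') := fun y' hy' =>
    intervalIntegral_mem_Icc_of_ae_le (hg_int y' hy') hy'.le hδg hgC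
  have h_meas : AEStronglyMeasurable (fun y' => Real.exp (-G y') * m y')
      (volume.restrict (Ioi 0)) :=
    ((continuousOn_primitive_Ioi hg_int).neg.rexp.aestronglyMeasurable measurableSet_Ioi).mul
      hm.aestronglyMeasurable
  have h_int : IntegrableOn (fun y' => Real.exp (-G y') * m y') (Ioi 0) := by
    refine Integrable.mono' ((exp_neg_integrableOn_Ioi 0 hδ).mul_const C) h_meas ?_
    filter_upwards [hpos] with y' hy'
    rw [Real.norm_of_nonneg (mul_nonneg (Real.exp_pos _).le (hm_nonneg y' hy'))]
    exact mul_le_mul (Real.exp_le_exp.2 (by linarith [(hG y' hy').1]))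
      ((hmg y' hy').trans (hgC y' hy')) (hm_nonneg y' hy') (Real.exp_pos _).le
  calc δ / C = ∫ y' in Ioi 0, δ * Real.exp (-C * y') := by
        rw [integral_const_mul, integral_exp_mul_Ioi (neg_neg_of_pos hC)]
        field_simp
        simp
    _ ≤ mergingIntegral g m := by
      refine integral_mono_ae ((exp_neg_integrableOn_Ioi 0 hC).const_mul δ) h_int ?_
      filter_upwards [hδm, hpos] with y' hδy' hy'
      rw [mul_comm]
      exact mul_le_mul (Real.exp_le_exp.2 (by linarith [(hG y' hy').2])) hδy' hδ.le
        (Real.exp_pos _).le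

theorem div_sum_le_mergingIntegral {ι : Type*} {s : Finset ι} {lam : ι → ℝ → ℝ} {B : ι → ℝ}
    (hmeas : ∀ i ∈ s, Measurable (lam i)) (hnonneg : ∀ i ∈ s, ∀ t, 0 ≤ t → 0 ≤ lam i t)
    (hB : ∀ i ∈ s, ∀ t, 0 ≤ t → lam i t ≤ B i) {i₀ : ι} (hi₀ : i₀ ∈ s) (hδ : 0 < δ)
    (hδi₀ : ∀ᵐ t ∂volume.restrict (Ioi 0), δ ≤ lam i₀ t) (hy : 0 ≤ y) :
    δ / ∑ i ∈ s, B i ≤ mergingIntegral (fun t => ∑ i ∈ s, max (lam i t) (lam i (y + t)))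
      (fun t => ∑ i ∈ s, min (lam i t) (lam i (y + t))) := by
  have hmin_nonneg : ∀ t, 0 < t → ∀ i ∈ s, 0 ≤ min (lam i t) (lam i (y + t)) :=
    fun t ht i hi => le_min (hnonneg i hi t ht.le) (hnonneg i hi (y + t) (by linarith))
  have hmeas_shift : ∀ i ∈ s, Measurable fun t => lam i (y + t) :=
    fun i hi => (hmeas i hi).comp (measurable_const_add y)
  refine div_le_mergingIntegral
    (Finset.measurable_sum _ fun i hi => (hmeas i hi).max (hmeas_shift i hi))
    (Finset.measurable_sum _ fun i hi => (hmeas i hi).min (hmeas_shift i hi))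
    (fun t ht => Finset.sum_le_sum fun i hi =>
      max_le (hB i hi t ht.le) (hB i hi (y + t) (by linarith)))
    (fun t ht => Finset.sum_nonneg (hmin_nonneg t ht))
    (fun t _ => Finset.sum_le_sum fun _ _ => min_le_max) hδ ?_
  filter_upwards [hδi₀, ae_restrict_Ioi_zero_add hy hδi₀, ae_restrict_mem measurableSet_Ioi]
    with t hδt hδyt ht
  exact (le_min hδt hδyt).trans (Finset.single_le_sum (hmin_nonneg t ht) hi₀)

end MergingIntegral

theorem stmt_11_general {X : Type*} [Fintype X] [DecidableEq X]
    (lam : X → X → ℝ → ℝ)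
    (hmeas : ∀ k k' : X, k' ≠ k → Measurable (lam k k'))
    (hpos : ∀ (k k' : X), k' ≠ k → ∀ y : ℝ, 0 ≤ y → 0 < lam k k' y)
    (B : X → X → ℝ)
    (hB : ∀ (k k' : X), k' ≠ k → ∀ y : ℝ, 0 ≤ y → lam k k' y ≤ B k k')
    (hessinf : ∀ k : X, ∃ k' : X, k' ≠ k ∧ ∃ δ : ℝ, 0 < δ ∧
        ∀ᵐ y ∂(volume.restrict (Ioi (0:ℝ))), δ ≤ lam k k' y)
    (P : X → ℝ → ℝ)
    (hP : ∀ (k : X) (y : ℝ), P k y =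
      ∫ y' in Ioi (0:ℝ),
        Real.exp (-∫ t in (0:ℝ)..y',
            ∑ k' ∈ Finset.univ.erase k, max (lam k k' t) (lam k k' (y + t)))
          * (∑ k' ∈ Finset.univ.erase k, min (lam k k' y') (lam k k' (y + y')))) :
    ∃ ε : ℝ, 0 < ε ∧ ∀ (k : X) (y : ℝ), 0 ≤ y → ε ≤ P k y := by
  refine exists_pos_forall_le_of_finite fun k => ?_
  obtain ⟨k₀, hk₀, δ, hδ, hδk₀⟩ := hessinf k
  have hk₀_mem : k₀ ∈ Finset.univ.erase k := Finset.mem_erase.2 ⟨hk₀, Finset.mem_univ _⟩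
  have hlam_pos : ∀ k' ∈ Finset.univ.erase k, ∀ t, 0 ≤ t → 0 < lam k k' t :=
    fun k' hk' => hpos k k' (Finset.ne_of_mem_erase hk')
  have hlam_le : ∀ k' ∈ Finset.univ.erase k, ∀ t, 0 ≤ t → lam k k' t ≤ B k k' :=
    fun k' hk' => hB k k' (Finset.ne_of_mem_erase hk')
  have hC : 0 < ∑ k' ∈ Finset.univ.erase k, B k k' :=
    Finset.sum_pos (fun k' hk' => (hlam_pos k' hk' 0 le_rfl).trans_le (hlam_le k' hk' 0 le_rfl))
      ⟨k₀, hk₀_mem⟩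
  refine ⟨_, div_pos hδ hC, fun y hy => ?_⟩
  rw [hP]
  exact div_sum_le_mergingIntegral (fun k' hk' => hmeas k k' (Finset.ne_of_mem_erase hk'))
    (fun k' hk' t ht => (hlam_pos k' hk' t ht).le) hlam_le hk₀_mem hδ hδk₀ hy

/-- Key estimate in Theorem 4.6: with bounded rates that each admit,
from every state `k`, some target `k'` whose rate has positive essential
infimum, the merging probability `P(k,y)` is bounded below uniformly in
`k` and `y ≥ 0` by a positive constant. -/
theorem stmt_11 {X : Type*} [Fintype X] [DecidableEq X]
    (hcard : 2 ≤ Fintype.card X)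
    (lam : X → X → ℝ → ℝ)
    (hmeas : ∀ k k' : X, k' ≠ k → Measurable (lam k k'))
    (hpos : ∀ (k k' : X), k' ≠ k → ∀ y : ℝ, 0 ≤ y → 0 < lam k k' y)
    (B : X → X → ℝ)
    (hB : ∀ (k k' : X), k' ≠ k → ∀ y : ℝ, 0 ≤ y → lam k k' y ≤ B k k')
    (hessinf : ∀ k : X, ∃ k' : X, k' ≠ k ∧ ∃ δ : ℝ, 0 < δ ∧
        ∀ᵐ y ∂(volume.restrict (Ioi (0:ℝ))), δ ≤ lam k k' y)
    (P : X → ℝ → ℝ)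
    (hP : ∀ (k : X) (y : ℝ), P k y =
      ∫ y' in Ioi (0:ℝ),
        Real.exp (-∫ t in (0:ℝ)..y',
            ∑ k' ∈ Finset.univ.erase k, max (lam k k' t) (lam k k' (y + t)))
          * (∑ k' ∈ Finset.univ.erase k, min (lam k k' y') (lam k k' (y + y')))) :
    ∃ ε : ℝ, 0 < ε ∧ ∀ (k : X) (y : ℝ), 0 ≤ y → ε ≤ P k y :=
  stmt_11_general lam hmeas hpos B hB hessinf P hP
end
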